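/- arXiv:2201.06142 — 2 statements merged into one kernel-verified Lean document; each statement's English description precedes it below -/
import Mathlib

section
/- Let Σ_F ∈ ℝ^{d×d} be positive definite and Σ_T ∈ ℝ^{d×d} positive semidefinite. Define the risk of a representation Λ ∈ ℝ^{d×R} as risk(Λ, Σ_T, Σ_F) = E_{β,X,ε}[(β̂_Λ − β)ᵀ Σ_F (β̂_Λ − β)] + σ², where β ~ N(0, Σ_T), rows of X are i.i.d. N(0, Σ_F), y = Xβ + ε, and β̂_Λ = Λ(XΛ)^† y. Then for every Λ, risk(Σ_F^{−1/2} Λ, Σ_T, Σ_F) = risk(Λ, Σ_F^{1/2} Σ_T Σ_F^{1/2}, I). -/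
open Matrix MeasureTheory ProbabilityTheory
open scoped NNReal

/-- `P` is the Moore–Penrose pseudoinverse of `A`. -/
def IsMoorePenrose {m n : Type*} [Fintype m] [Fintype n]
    (A : Matrix m n ℝ) (P : Matrix n m ℝ) : Prop :=
  A * P * A = A ∧ P * A * P = P ∧ (A * P)ᵀ = A * P ∧ (P * A)ᵀ = P * A

/-- The few-shot risk of the representation `Λ`, where the task vector is
`β = ST z` (`z` standard Gaussian, so `β ~ N(0, ST ST)`), the rows of `X` are
i.i.d. `N(0, SF SF)` (row `i` of `X` is `SF zᵢ`, encoded as `X = Z * SF` for `SF`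
symmetric), `y = Xβ + ε` with `ε ~ N(0, σ²)` i.i.d., and
`β̂ = Λ (XΛ)† y` is the weighted minimum-norm interpolator.
`risk = E[(β̂ − β)ᵀ (SF SF) (β̂ − β)] + σ²`. -/
noncomputable def metaRisk (d n R : ℕ)
    (pinv : Matrix (Fin n) (Fin R) ℝ → Matrix (Fin R) (Fin n) ℝ)
    (Λ : Matrix (Fin d) (Fin R) ℝ) (ST SF : Matrix (Fin d) (Fin d) ℝ)
    (σ : ℝ≥0) : ℝ :=
  (∫ ω : (Fin d → ℝ) × (Fin n → Fin d → ℝ) × (Fin n → ℝ),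
      (let β : Fin d → ℝ := ST.mulVec ω.1
       let X : Matrix (Fin n) (Fin d) ℝ := Matrix.of ω.2.1 * SF
       let y : Fin n → ℝ := X.mulVec β + ω.2.2
       let βhat : Fin d → ℝ := Λ.mulVec ((pinv (X * Λ)).mulVec y)
       (βhat - β) ⬝ᵥ (SF * SF).mulVec (βhat - β))
    ∂((Measure.pi fun _ : Fin d => gaussianReal 0 1).prod
       ((Measure.pi fun _ : Fin n => Measure.pi fun _ : Fin d => gaussianReal 0 1).prod
        (Measure.pi fun _ : Fin n => gaussianReal 0 (σ ^ 2)))))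
  + (σ : ℝ) ^ 2

/-!
Substituting `x̃ = Σ_F^{-1/2} x`, `β̃ = Σ_F^{1/2} β` turns the risk of `Σ_F^{-1/2} Λ` under
`(Σ_T, Σ_F)` into the risk of `Λ` with identity feature covariance and task vector
`β̃ = SF ST z`, `z` standard Gaussian. That risk only depends on `β̃` through its law, i.e. through
`(SF ST)(SF ST)ᵀ = C Cᵀ`. Comparing laws would need a measurable integrand, so instead we write
`SF ST = C u` with `u` orthogonal (a polar decomposition, from the extension of the isometry
`Cᵀ x ↦ (SF ST)ᵀ x`) and use that `z ↦ u z` is a measure-preserving measurable equivalence of the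
standard Gaussian, which transports the integral of any function.
-/

open WithLp

theorem exists_linearIsometry_apply_eq_of_norm_eq {𝕜 E V : Type*} [RCLike 𝕜] [AddCommGroup E]
    [Module 𝕜 E] [NormedAddCommGroup V] [InnerProductSpace 𝕜 V] [FiniteDimensional 𝕜 V]
    (b c : E →ₗ[𝕜] V) (h : ∀ x, ‖b x‖ = ‖c x‖) :
    ∃ W : V →ₗᵢ[𝕜] V, ∀ x, W (c x) = b x := by
  have hker : LinearMap.ker c ≤ LinearMap.ker b := fun x hx =>
    LinearMap.mem_ker.2 (norm_eq_zero.1 ((h x).trans (norm_eq_zero.2 hx)))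
  let L : LinearMap.range c →ₗ[𝕜] V :=
    (LinearMap.ker c).liftQ b hker ∘ₗ c.quotKerEquivRange.symm.toLinearMap
  have hL : ∀ x, L ⟨c x, LinearMap.mem_range_self c x⟩ = b x := fun x => by
    simp [L, c.quotKerEquivRange_symm_apply_image]
  refine ⟨LinearIsometry.extend ⟨L, ?_⟩, fun x => ?_⟩
  · rintro ⟨_, x, rfl⟩
    exact (congrArg norm (hL x)).trans (h x)
  · exact (LinearIsometry.extend_apply _ ⟨c x, _⟩).trans (hL x)

theorem ContinuousLinearMap.exists_mem_unitary_eq_mul_of_mul_star_eq {𝕜 V : Type*} [RCLike 𝕜]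
    [NormedAddCommGroup V] [InnerProductSpace 𝕜 V] [FiniteDimensional 𝕜 V] [CompleteSpace V]
    {A B : V →L[𝕜] V} (h : A * star A = B * star B) :
    ∃ u ∈ unitary (V →L[𝕜] V), A = B * u := by
  have hnorm : ∀ x, ‖star A x‖ = ‖star B x‖ := fun x => by
    rw [← sq_eq_sq₀ (norm_nonneg _) (norm_nonneg _), apply_norm_sq_eq_inner_adjoint_left,
      apply_norm_sq_eq_inner_adjoint_left]
    simp only [← star_eq_adjoint, star_star, ← mul_def, h]
  obtain ⟨W, hW⟩ := exists_linearIsometry_apply_eq_of_norm_eq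
    (star A : V →ₗ[𝕜] V) (star B : V →ₗ[𝕜] V) hnorm
  let U := W.toLinearIsometryEquiv rfl
  have hU : (U : V →L[𝕜] V) ∈ unitary (V →L[𝕜] V) := (Unitary.linearIsometryEquiv.symm U).2
  refine ⟨star (U : V →L[𝕜] V), Unitary.star_mem hU, ?_⟩
  have hstar : star A = (U : V →L[𝕜] V) * star B := ContinuousLinearMap.ext fun x => (hW x).symm
  rw [← star_star A, hstar, star_mul, star_star]

section GaussianRotation

variable {ι : Type*} [Fintype ι]

noncomputable def LinearIsometryEquiv.piMeasurableEquiv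
    (U : EuclideanSpace ℝ ι ≃ₗᵢ[ℝ] EuclideanSpace ℝ ι) : (ι → ℝ) ≃ᵐ (ι → ℝ) :=
  (MeasurableEquiv.toLp 2 (ι → ℝ)).trans
    (U.toMeasurableEquiv.trans (MeasurableEquiv.toLp 2 (ι → ℝ)).symm)

theorem LinearIsometryEquiv.measurePreserving_piMeasurableEquiv
    (U : EuclideanSpace ℝ ι ≃ₗᵢ[ℝ] EuclideanSpace ℝ ι) :
    MeasurePreserving U.piMeasurableEquiv (Measure.pi fun _ : ι => gaussianReal 0 1)
      (Measure.pi fun _ : ι => gaussianReal 0 1) := by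
  have hLp : MeasurePreserving (MeasurableEquiv.toLp 2 (ι → ℝ))
      (Measure.pi fun _ : ι => gaussianReal 0 1) (stdGaussian (EuclideanSpace ℝ ι)) :=
    ⟨by fun_prop, map_pi_eq_stdGaussian⟩
  have hU : MeasurePreserving U.toMeasurableEquiv (stdGaussian (EuclideanSpace ℝ ι))
      (stdGaussian (EuclideanSpace ℝ ι)) :=
    ⟨U.toMeasurableEquiv.measurable, stdGaussian_map U⟩
  exact hLp.symm.comp (hU.comp hLp)

theorem integral_prod_mulVec_eq_of_mul_transpose_eq [DecidableEq ι] {β G : Type*}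
    [MeasurableSpace β] [NormedAddCommGroup G] [NormedSpace ℝ G] (ν : Measure β) [SFinite ν]
    {M N : Matrix ι ι ℝ} (h : M * Mᵀ = N * Nᵀ) (f : (ι → ℝ) → β → G) :
    ∫ ω, f (M *ᵥ ω.1) ω.2 ∂((Measure.pi fun _ : ι => gaussianReal 0 1).prod ν)
      = ∫ ω, f (N *ᵥ ω.1) ω.2 ∂((Measure.pi fun _ : ι => gaussianReal 0 1).prod ν) := by
  have hstar : ∀ P : Matrix ι ι ℝ, star P = Pᵀ := fun P => conjTranspose_eq_transpose_of_trivial P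
  obtain ⟨u, hu, hMN⟩ := ContinuousLinearMap.exists_mem_unitary_eq_mul_of_mul_star_eq
    (A := toEuclideanCLM (𝕜 := ℝ) M) (B := toEuclideanCLM (𝕜 := ℝ) N)
    (by rw [← map_star, ← map_mul, ← map_star, ← map_mul, hstar, hstar, h])
  let e := (Unitary.linearIsometryEquiv ⟨u, hu⟩).piMeasurableEquiv
  have he : ∀ z, M *ᵥ z = N *ᵥ e z := fun z => by
    show _ = N *ᵥ ofLp (u (toLp 2 z))
    simpa using congrArg (fun T => ofLp (T (toLp 2 z))) hMN
  have hmp : MeasurePreserving (e.prodCongr (MeasurableEquiv.refl β))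
      ((Measure.pi fun _ : ι => gaussianReal 0 1).prod ν)
      ((Measure.pi fun _ : ι => gaussianReal 0 1).prod ν) :=
    (LinearIsometryEquiv.measurePreserving_piMeasurableEquiv _).prod (MeasurePreserving.id ν)
  simp_rw [he]
  exact hmp.integral_comp' (fun ω => f (N *ᵥ ω.1) ω.2)

end GaussianRotation

section Risk

variable {d n R : ℕ} (pinv : Matrix (Fin n) (Fin R) ℝ → Matrix (Fin R) (Fin n) ℝ)
  (Λ : Matrix (Fin d) (Fin R) ℝ) (σ : ℝ≥0)

theorem metaRisk_eq_of_mul_transpose_eq {ST ST' : Matrix (Fin d) (Fin d) ℝ}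
    (SF : Matrix (Fin d) (Fin d) ℝ) (h : ST * STᵀ = ST' * ST'ᵀ) :
    metaRisk d n R pinv Λ ST SF σ = metaRisk d n R pinv Λ ST' SF σ := by
  unfold metaRisk
  congr 1
  exact integral_prod_mulVec_eq_of_mul_transpose_eq
    ((Measure.pi fun _ : Fin n => Measure.pi fun _ : Fin d => gaussianReal 0 1).prod
      (Measure.pi fun _ : Fin n => gaussianReal 0 (σ ^ 2))) h
    (fun β w =>
      let X := Matrix.of w.1 * SF
      let βhat := Λ *ᵥ (pinv (X * Λ) *ᵥ (X *ᵥ β + w.2))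
      (βhat - β) ⬝ᵥ (SF * SF) *ᵥ (βhat - β))

theorem metaRisk_inv_mul_eq {ST SF : Matrix (Fin d) (Fin d) ℝ} (hSF : IsUnit SF.det)
    (hSFsym : SFᵀ = SF) :
    metaRisk d n R pinv (SF⁻¹ * Λ) ST SF σ = metaRisk d n R pinv Λ (SF * ST) 1 σ := by
  unfold metaRisk
  congr 1
  refine integral_congr_ae (ae_of_all _ fun ω => ?_)
  have hX : Matrix.of ω.2.1 * SF * (SF⁻¹ * Λ) = Matrix.of ω.2.1 * Λ := by
    rw [Matrix.mul_assoc, ← Matrix.mul_assoc SF, mul_nonsing_inv _ hSF, Matrix.one_mul]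
  have hy : (Matrix.of ω.2.1 * SF) *ᵥ (ST *ᵥ ω.1) = Matrix.of ω.2.1 *ᵥ ((SF * ST) *ᵥ ω.1) := by
    rw [mulVec_mulVec, mulVec_mulVec, Matrix.mul_assoc]
  have hnorm : ∀ v, v ⬝ᵥ (SF * SF) *ᵥ v = SF *ᵥ v ⬝ᵥ SF *ᵥ v := fun v => by
    nth_rw 1 [← hSFsym]
    rw [← mulVec_mulVec, dotProduct_transpose_mulVec]
  have hwhiten : ∀ a, SF *ᵥ (SF⁻¹ *ᵥ a - ST *ᵥ ω.1) = a - (SF * ST) *ᵥ ω.1 := fun a => by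
    rw [mulVec_sub, mulVec_mulVec, mulVec_mulVec, mul_nonsing_inv _ hSF, one_mulVec]
  dsimp only
  rw [hX, hy, ← mulVec_mulVec, hnorm, hwhiten]
  simp only [Matrix.mul_one, one_mulVec]

end Risk

theorem risk_whitening_invariance_general
    {d n R : ℕ}
    (pinv : Matrix (Fin n) (Fin R) ℝ → Matrix (Fin R) (Fin n) ℝ)
    (Λ : Matrix (Fin d) (Fin R) ℝ)
    (SF ST C : Matrix (Fin d) (Fin d) ℝ)
    (hSF : SF.PosDef) (hSFsym : SFᵀ = SF)
    (hSTsym : STᵀ = ST)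
    (hCsym : Cᵀ = C)
    (hCsq : C * C = SF * (ST * ST) * SF)
    (σ : ℝ≥0) :
    metaRisk d n R pinv (SF⁻¹ * Λ) ST SF σ = metaRisk d n R pinv Λ C 1 σ := by
  rw [metaRisk_inv_mul_eq pinv Λ σ ((isUnit_iff_isUnit_det SF).mp hSF.isUnit) hSFsym]
  refine metaRisk_eq_of_mul_transpose_eq pinv Λ σ 1 ?_
  rw [transpose_mul, hSFsym, hSTsym, hCsym, hCsq]
  simp only [Matrix.mul_assoc]

/-- Invariance of the few-shot risk under whitening: with `Σ_F = SF²` positive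
definite, `Σ_T = ST²` positive semidefinite, and `C` a positive semidefinite
square root of the canonical task covariance `Σ̃_T = Σ_F^{1/2} Σ_T Σ_F^{1/2} = SF (ST ST) SF`,
one has `risk(Σ_F^{−1/2} Λ, Σ_T, Σ_F) = risk(Λ, Σ̃_T, I)`. -/
theorem risk_whitening_invariance
    {d n R : ℕ}
    (pinv : Matrix (Fin n) (Fin R) ℝ → Matrix (Fin R) (Fin n) ℝ)
    (hpinv : ∀ A, IsMoorePenrose A (pinv A))
    (Λ : Matrix (Fin d) (Fin R) ℝ)
    (SF ST C : Matrix (Fin d) (Fin d) ℝ)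
    (hSF : SF.PosDef) (hSFsym : SFᵀ = SF)
    (hST : (ST * ST).PosSemidef) (hSTsym : STᵀ = ST)
    (hC : C.PosSemidef) (hCsym : Cᵀ = C)
    (hCsq : C * C = SF * (ST * ST) * SF)
    (σ : ℝ≥0) :
    metaRisk d n R pinv (SF⁻¹ * Λ) ST SF σ = metaRisk d n R pinv Λ C 1 σ :=
  risk_whitening_invariance_general pinv Λ SF ST C hSF hSFsym hSTsym hCsym hCsq σ
end

section
/- Let A, Â be symmetric d×d matrices with ‖Â − A‖ ≤ Δ (operator norm), and suppose λ_r(A) − λ_{r+1}(A) > Δ, where λ_k denotes the k-th largest eigenvalue. Let W and Ŵ be the subspaces spanned by the top r eigenvectors of A and Â respectively. Then sin∠(W, Ŵ) ≤ Δ / (λ_r(A) − λ_{r+1}(A) − Δ). -/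
open Matrix

/-- The `ℓ₂ → ℓ₂` operator (spectral) norm of a real square matrix. -/
noncomputable def opNorm {d : ℕ} (M : Matrix (Fin d) (Fin d) ℝ) : ℝ :=
  ‖Matrix.toEuclideanCLM (𝕜 := ℝ) M‖

/-!
Let `P`, `Q` be the projections onto the top `r` eigenvectors of `A`, `Â`. Since
`P - Q = P (1 - Q) - (1 - P) Q` is a sum of two operators with orthogonal ranges,
`‖P - Q‖ ≤ max ‖(1 - Q) P‖ ‖(1 - P) Q‖`. Let `σ = ‖(1 - Q) P‖`, let `z` be a unit top singular
vector of `(1 - Q) P` and `w = (1 - Q) z`. Then `z ∈ ran P`, `w ∈ ker Q`, `‖w‖ = σ` and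
`P w = σ² z`, so pairing `Â - A` with `z` and `w` gives `σ (λ_r(A) - λ_{r+1}(Â)) ≤ ‖Â - A‖`.
Weyl's inequality `λ_{r+1}(Â) ≤ λ_{r+1}(A) + Δ` turns this into `σ (gap - Δ) ≤ Δ`; the other
block is symmetric.
-/

open scoped RealInnerProductSpace

local notation "𝓜" => Matrix.toEuclideanCLM (𝕜 := ℝ)

section InnerProductSpace

variable {E : Type*} [NormedAddCommGroup E] [InnerProductSpace ℝ E]

theorem ContinuousLinearMap.le_add_norm_sub_of_inner_le {A B : E →L[ℝ] E} {x : E} (hx : x ≠ 0)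
    {b c : ℝ} (hA : ⟪A x, x⟫ ≤ b * ‖x‖ ^ 2) (hB : c * ‖x‖ ^ 2 ≤ ⟪B x, x⟫) : c ≤ b + ‖B - A‖ := by
  have hE : ⟪(B - A) x, x⟫ ≤ ‖B - A‖ * ‖x‖ ^ 2 :=
    (real_inner_le_norm _ _).trans (by rw [sq, ← mul_assoc]; gcongr; exact (B - A).le_opNorm x)
  rw [_root_.sub_apply, inner_sub_left] at hE
  have hx2 : 0 < ‖x‖ ^ 2 := by positivity
  nlinarith

variable [CompleteSpace E]

theorem ContinuousLinearMap.exists_norm_eq_one_star_mul_self_apply [FiniteDimensional ℝ E]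
    [Nontrivial E] (X : E →L[ℝ] E) : ∃ z : E, ‖z‖ = 1 ∧ (star X * X) z = ‖X‖ ^ 2 • z := by
  have hquad (x : E) : (star X * X).reApplyInnerSelf x = ‖X x‖ ^ 2 := by
    rw [reApplyInnerSelf_apply, star_eq_adjoint, mul_apply_eq_comp, adjoint_inner_left,
      real_inner_self_eq_norm_sq, RCLike.re_to_real]
  obtain ⟨x, hx⟩ := exists_norm_eq E zero_le_one
  obtain ⟨z, hz, hmax⟩ := (isCompact_sphere (0 : E) 1).exists_isMaxOn ⟨x, by simpa using hx⟩
    (star X * X).reApplyInnerSelf_continuous.continuousOn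
  have hz1 : ‖z‖ = 1 := by simpa using hz
  have hnorm : ‖X‖ = ‖X z‖ := by
    refine le_antisymm (opNorm_le_of_unit_norm (norm_nonneg _) fun y hy => ?_) ?_
    · have := hmax (show y ∈ Metric.sphere (0 : E) 1 by simpa using hy)
      rw [Set.mem_ofPred_eq, hquad, hquad] at this
      exact (pow_le_pow_iff_left₀ (norm_nonneg _) (norm_nonneg _) two_ne_zero).mp this
    · simpa [hz1] using X.le_opNorm z
  obtain ⟨c, hc⟩ : ∃ c : ℝ, (star X * X) z = c • z :=
    ⟨_, ((IsSelfAdjoint.star_mul_self X).hasEigenvector_of_isMaxOn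
      (ne_zero_of_norm_ne_zero (by simp [hz1])) (by rwa [hz1])).apply_eq_smul⟩
  refine ⟨z, hz1, ?_⟩
  have : c = ‖X z‖ ^ 2 := by
    rw [← hquad, reApplyInnerSelf_apply, hc, inner_smul_left, real_inner_self_eq_norm_sq, hz1]
    simp
  rw [hc, this, hnorm]

namespace IsStarProjection

variable {P Q A B : E →L[ℝ] E}

theorem apply_apply (hP : IsStarProjection P) (x : E) : P (P x) = P x :=
  congr($(hP.isIdempotentElem.eq) x)

theorem inner_apply_left (hP : IsStarProjection P) (x y : E) : ⟪P x, y⟫ = ⟪x, P y⟫ :=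
  hP.isSelfAdjoint.isSymmetric x y

theorem inner_apply_one_sub_apply (hP : IsStarProjection P) (x y : E) :
    ⟪P x, (1 - P) y⟫ = 0 := by
  rw [hP.inner_apply_left, ← mul_apply_eq_comp, hP.mul_one_sub_self, _root_.zero_apply,
    inner_zero_right]

theorem norm_sq_add_norm_sq_one_sub (hP : IsStarProjection P) (x : E) :
    ‖P x‖ ^ 2 + ‖(1 - P) x‖ ^ 2 = ‖x‖ ^ 2 := by
  have := norm_add_sq_real (P x) ((1 - P) x)
  rw [hP.inner_apply_one_sub_apply, mul_zero, add_zero, ← _root_.add_apply, add_sub_cancel,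
    one_apply_eq_self] at this
  exact this.symm

theorem norm_sub_le (hP : IsStarProjection P) (hQ : IsStarProjection Q) {c : ℝ}
    (hPQ : ‖(1 - Q) * P‖ ≤ c) (hQP : ‖(1 - P) * Q‖ ≤ c) : ‖P - Q‖ ≤ c := by
  have hc : 0 ≤ c := (norm_nonneg _).trans hPQ
  refine ContinuousLinearMap.opNorm_le_bound _ hc fun x => ?_
  have hdecomp : (P - Q) x = P ((1 - Q) x) - (1 - P) (Q x) := by
    simp only [_root_.sub_apply, one_apply_eq_self, map_sub]
    abel
  have hfirst : ‖P ((1 - Q) x)‖ ≤ c * ‖(1 - Q) x‖ := by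
    have : P ((1 - Q) x) = star ((1 - Q) * P) ((1 - Q) x) := by
      rw [star_mul, hP.isSelfAdjoint.star_eq, hQ.one_sub.isSelfAdjoint.star_eq, mul_apply_eq_comp,
        hQ.one_sub.apply_apply]
    rw [this]
    exact ((star ((1 - Q) * P)).le_opNorm _).trans
      (by rw [ContinuousLinearMap.star_eq_adjoint, LinearIsometryEquiv.norm_map]; gcongr)
  have hsecond : ‖(1 - P) (Q x)‖ ≤ c * ‖Q x‖ := by
    have : (1 - P) (Q x) = ((1 - P) * Q) (Q x) := by rw [mul_apply_eq_comp, hQ.apply_apply]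
    rw [this]
    exact (((1 - P) * Q).le_opNorm _).trans (by gcongr)
  have hpyth := norm_sub_sq_real (P ((1 - Q) x)) ((1 - P) (Q x))
  rw [hP.inner_apply_one_sub_apply, mul_zero, sub_zero] at hpyth
  have hx := hQ.norm_sq_add_norm_sq_one_sub x
  refine le_of_sq_le_sq ?_ (by positivity)
  rw [hdecomp, hpyth, mul_pow, ← hx]
  have h1 := pow_le_pow_left₀ (norm_nonneg _) hfirst 2
  have h2 := pow_le_pow_left₀ (norm_nonneg _) hsecond 2
  rw [mul_pow] at h1 h2
  linarith

theorem exists_principal_vector [FiniteDimensional ℝ E] (hP : IsStarProjection P)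
    (hQ : IsStarProjection Q) (hσ : 0 < ‖(1 - Q) * P‖) :
    ∃ z : E, ‖z‖ = 1 ∧ P z = z ∧ ‖(1 - Q) z‖ = ‖(1 - Q) * P‖ ∧
      P ((1 - Q) z) = ‖(1 - Q) * P‖ ^ 2 • z := by
  have : Nontrivial E := not_subsingleton_iff_nontrivial.mp fun _ =>
    hσ.ne' (by simp [Subsingleton.elim ((1 - Q) * P) 0])
  obtain ⟨z, hz1, hz⟩ := ((1 - Q) * P).exists_norm_eq_one_star_mul_self_apply
  generalize ‖(1 - Q) * P‖ = σ at hσ hz ⊢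
  rw [star_mul, hP.isSelfAdjoint.star_eq, hQ.one_sub.isSelfAdjoint.star_eq, mul_assoc,
    ← mul_assoc (1 - Q), hQ.one_sub.isIdempotentElem.eq, mul_apply_eq_comp,
    mul_apply_eq_comp] at hz
  have hPz : P z = z := by
    have h := congr(P $hz)
    rw [hP.apply_apply, hz, map_smul] at h
    exact smul_right_injective E (by positivity) h.symm
  rw [hPz] at hz
  refine ⟨z, hz1, hPz, (pow_left_inj₀ (norm_nonneg _) hσ.le two_ne_zero).mp ?_, hz⟩
  rw [← real_inner_self_eq_norm_sq]
  calc ⟪(1 - Q) z, (1 - Q) z⟫ = ⟪z, (1 - Q) ((1 - Q) z)⟫ := hQ.one_sub.inner_apply_left _ _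
    _ = ⟪P z, (1 - Q) z⟫ := by rw [hQ.one_sub.apply_apply, hPz, real_inner_comm]
    _ = σ ^ 2 := by
      rw [hP.inner_apply_left, hz, inner_smul_right, real_inner_self_eq_norm_sq, hz1, one_pow,
        mul_one]

theorem norm_one_sub_mul_mul_sub_le [FiniteDimensional ℝ E] (hP : IsStarProjection P)
    (hQ : IsStarProjection Q) (hAP : Commute A P) (hBQ : Commute B Q) {α b : ℝ}
    (hA : ∀ z, P z = z → α * ‖z‖ ^ 2 ≤ ⟪A z, z⟫) (hB : ∀ w, Q w = 0 → ⟪B w, w⟫ ≤ b * ‖w‖ ^ 2) :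
    ‖(1 - Q) * P‖ * (α - b) ≤ ‖B - A‖ := by
  rcases (norm_nonneg ((1 - Q) * P)).eq_or_lt with hσ | hσ
  · rw [← hσ, zero_mul]
    exact norm_nonneg _
  obtain ⟨z, hz1, hPz, hw, hPw⟩ := exists_principal_vector hP hQ hσ
  generalize ‖(1 - Q) * P‖ = σ at hσ hw hPw ⊢
  set w := (1 - Q) z
  have hQw : Q w = 0 := by rw [← mul_apply_eq_comp, hQ.mul_one_sub_self, _root_.zero_apply]
  have hBz : ⟪B z, w⟫ = ⟪B w, w⟫ := by
    have hsplit : z = Q z + w := by simp [w]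
    calc ⟪B z, w⟫ = ⟪Q (B z), w⟫ + ⟪B w, w⟫ := by
          conv_lhs => rw [hsplit]
          rw [map_add, inner_add_left, ← mul_apply_eq_comp B, hBQ.eq, mul_apply_eq_comp]
      _ = ⟪B w, w⟫ := by rw [hQ.inner_apply_left, hQw, inner_zero_right, zero_add]
  have hAz : ⟪A z, w⟫ = σ ^ 2 * ⟪A z, z⟫ := by
    calc ⟪A z, w⟫ = ⟪P (A z), w⟫ := by rw [← mul_apply_eq_comp, ← hAP.eq, mul_apply_eq_comp, hPz]
      _ = ⟪A z, P w⟫ := hP.inner_apply_left _ _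
      _ = σ ^ 2 * ⟪A z, z⟫ := by rw [hPw, inner_smul_right]
  have hE : -⟪(B - A) z, w⟫ ≤ ‖B - A‖ * σ := by
    calc -⟪(B - A) z, w⟫ ≤ ‖(B - A) z‖ * ‖w‖ := (neg_le_abs _).trans (abs_real_inner_le_norm _ _)
      _ ≤ ‖B - A‖ * σ := by
        rw [hw]
        gcongr
        simpa [hz1] using (B - A).le_opNorm z
  have hα : α ≤ ⟪A z, z⟫ := by simpa [hz1] using hA z hPz
  have hb : ⟪B w, w⟫ ≤ b * σ ^ 2 := by simpa [hw] using hB w hQw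
  rw [_root_.sub_apply, inner_sub_left, hBz, hAz] at hE
  refine le_of_mul_le_mul_left ?_ hσ
  nlinarith

end IsStarProjection

end InnerProductSpace

namespace Matrix

variable {ι : Type*} [Fintype ι] [DecidableEq ι]

def spectralProjection (U : Matrix ι ι ℝ) (p : ι → Prop) [DecidablePred p] : Matrix ι ι ℝ :=
  U * diagonal (fun i => if p i then 1 else 0) * Uᵀ

variable {U : Matrix ι ι ℝ}

theorem conj_diagonal_mul_conj_diagonal (hU : Uᵀ * U = 1) (a b : ι → ℝ) :
    U * diagonal a * Uᵀ * (U * diagonal b * Uᵀ) = U * diagonal (a * b) * Uᵀ := by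
  calc U * diagonal a * Uᵀ * (U * diagonal b * Uᵀ)
        = U * diagonal a * (Uᵀ * U) * diagonal b * Uᵀ := by simp only [mul_assoc]
    _ = U * diagonal (a * b) * Uᵀ := by rw [hU, mul_one, mul_assoc U, diagonal_mul_diagonal']; rfl

theorem commute_conj_diagonal (hU : Uᵀ * U = 1) (a b : ι → ℝ) :
    Commute (U * diagonal a * Uᵀ) (U * diagonal b * Uᵀ) := by
  rw [Commute, SemiconjBy, conj_diagonal_mul_conj_diagonal hU, conj_diagonal_mul_conj_diagonal hU,
    mul_comm a]

theorem isStarProjection_spectralProjection (hU : Uᵀ * U = 1) (p : ι → Prop) [DecidablePred p] :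
    IsStarProjection (spectralProjection U p) where
  isIdempotentElem := by
    rw [IsIdempotentElem, spectralProjection, conj_diagonal_mul_conj_diagonal hU]
    congr 3
    funext i
    by_cases h : p i <;> simp [h]
  isSelfAdjoint :=
    isHermitian_mul_mul_conjTranspose U (isHermitian_diagonal_of_self_adjoint _ (.all _))

theorem toEuclideanCLM_transpose_conj_diagonal_apply (hU : Uᵀ * U = 1) (a : ι → ℝ)
    (x : EuclideanSpace ℝ ι) (i : ι) :
    𝓜 Uᵀ (𝓜 (U * diagonal a * Uᵀ) x) i = a i * 𝓜 Uᵀ x i := by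
  have : Uᵀ * (U * diagonal a * Uᵀ) = diagonal a * Uᵀ := by simp only [← mul_assoc, hU, one_mul]
  rw [← mul_apply_eq_comp, ← map_mul, this, map_mul, mul_apply_eq_comp]
  simp [mulVec_diagonal]

theorem inner_toEuclideanCLM_conj_diagonal (μ : ι → ℝ) (x : EuclideanSpace ℝ ι) :
    ⟪𝓜 (U * diagonal μ * Uᵀ) x, x⟫ = ∑ i, μ i * 𝓜 Uᵀ x i ^ 2 := by
  rw [real_inner_comm, inner_toEuclideanCLM, ← mulVec_mulVec, ← mulVec_mulVec, dotProduct_mulVec,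
    ← mulVec_transpose]
  simp [dotProduct, mulVec_diagonal, sq, mul_left_comm]

theorem norm_sq_eq_sum_toEuclideanCLM_transpose_apply_sq (hU : Uᵀ * U = 1)
    (x : EuclideanSpace ℝ ι) : ‖x‖ ^ 2 = ∑ i, 𝓜 Uᵀ x i ^ 2 := by
  simpa [mul_eq_one_comm.mp hU, real_inner_self_eq_norm_sq] using
    inner_toEuclideanCLM_conj_diagonal (U := U) (fun _ => 1) x

variable {μ : ι → ℝ}

theorem inner_toEuclideanCLM_conj_diagonal_le (hU : Uᵀ * U = 1) {b : ℝ} {x : EuclideanSpace ℝ ι}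
    (h : ∀ i, 𝓜 Uᵀ x i ≠ 0 → μ i ≤ b) : ⟪𝓜 (U * diagonal μ * Uᵀ) x, x⟫ ≤ b * ‖x‖ ^ 2 := by
  rw [inner_toEuclideanCLM_conj_diagonal, norm_sq_eq_sum_toEuclideanCLM_transpose_apply_sq hU,
    Finset.mul_sum]
  refine Finset.sum_le_sum fun i _ => ?_
  by_cases hi : 𝓜 Uᵀ x i = 0
  · simp [hi]
  · exact mul_le_mul_of_nonneg_right (h i hi) (sq_nonneg _)

theorem le_inner_toEuclideanCLM_conj_diagonal (hU : Uᵀ * U = 1) {a : ℝ} {x : EuclideanSpace ℝ ι}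
    (h : ∀ i, 𝓜 Uᵀ x i ≠ 0 → a ≤ μ i) : a * ‖x‖ ^ 2 ≤ ⟪𝓜 (U * diagonal μ * Uᵀ) x, x⟫ := by
  rw [inner_toEuclideanCLM_conj_diagonal, norm_sq_eq_sum_toEuclideanCLM_transpose_apply_sq hU,
    Finset.mul_sum]
  refine Finset.sum_le_sum fun i _ => ?_
  by_cases hi : 𝓜 Uᵀ x i = 0
  · simp [hi]
  · exact mul_le_mul_of_nonneg_right (h i hi) (sq_nonneg _)

variable {p : ι → Prop} [DecidablePred p] {x : EuclideanSpace ℝ ι}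

theorem le_inner_of_spectralProjection_apply_eq_self (hU : Uᵀ * U = 1) {a : ℝ}
    (ha : ∀ i, p i → a ≤ μ i) (hx : 𝓜 (spectralProjection U p) x = x) :
    a * ‖x‖ ^ 2 ≤ ⟪𝓜 (U * diagonal μ * Uᵀ) x, x⟫ := by
  refine le_inner_toEuclideanCLM_conj_diagonal hU fun i hi => ha i ?_
  rw [← hx, spectralProjection, toEuclideanCLM_transpose_conj_diagonal_apply hU] at hi
  by_contra h
  simp [h] at hi

theorem inner_le_of_spectralProjection_apply_eq_zero (hU : Uᵀ * U = 1) {b : ℝ}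
    (hb : ∀ i, ¬ p i → μ i ≤ b) (hx : 𝓜 (spectralProjection U p) x = 0) :
    ⟪𝓜 (U * diagonal μ * Uᵀ) x, x⟫ ≤ b * ‖x‖ ^ 2 := by
  refine inner_toEuclideanCLM_conj_diagonal_le hU fun i hi => hb i fun h => hi ?_
  have := toEuclideanCLM_transpose_conj_diagonal_apply hU (fun i => if p i then 1 else 0) x i
  rw [← spectralProjection, hx] at this
  simpa [h] using this.symm

variable {V : Matrix ι ι ℝ} {ν : ι → ℝ}

theorem norm_one_sub_mul_spectralProjection_mul_sub_le (hU : Uᵀ * U = 1) (hV : Vᵀ * V = 1)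
    (p : ι → Prop) [DecidablePred p] {a b : ℝ} (ha : ∀ i, p i → a ≤ μ i)
    (hb : ∀ i, ¬ p i → ν i ≤ b) :
    ‖(1 - 𝓜 (spectralProjection V p)) * 𝓜 (spectralProjection U p)‖ * (a - b) ≤
      ‖𝓜 (V * diagonal ν * Vᵀ - U * diagonal μ * Uᵀ)‖ := by
  rw [map_sub]
  exact ((isStarProjection_spectralProjection hU p).map _).norm_one_sub_mul_mul_sub_le
    ((isStarProjection_spectralProjection hV p).map _) ((commute_conj_diagonal hU _ _).map _)
    ((commute_conj_diagonal hV _ _).map _)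
    (fun z hz => le_inner_of_spectralProjection_apply_eq_self hU ha hz)
    (fun w hw => inner_le_of_spectralProjection_apply_eq_zero hV hb hw)

theorem le_add_norm_sub_of_antitone [LinearOrder ι] (hU : Uᵀ * U = 1) (hV : Vᵀ * V = 1)
    (hμ : Antitone μ) (hν : Antitone ν) (k : ι) :
    ν k ≤ μ k + ‖𝓜 (V * diagonal ν * Vᵀ - U * diagonal μ * Uᵀ)‖ := by
  -- `card ι - 1` linear conditions: no component along `uᵢ` for `i < k`, nor along `vᵢ` for `k < i`
  let L : EuclideanSpace ℝ ι →ₗ[ℝ] ({i // i ≠ k} → ℝ) := LinearMap.pi fun i =>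
    ((EuclideanSpace.proj (i : ι)).comp (if (i : ι) < k then 𝓜 Uᵀ else 𝓜 Vᵀ)).toLinearMap
  have hdim : Module.finrank ℝ ({i // i ≠ k} → ℝ) < Module.finrank ℝ (EuclideanSpace ℝ ι) := by
    have := Fintype.card_pos_iff.mpr ⟨k⟩
    simp [Fintype.card_subtype_compl]
    omega
  obtain ⟨x, hxL, hx⟩ :=
    Submodule.exists_mem_ne_zero_of_ne_bot (LinearMap.ker_ne_bot_of_finrank_lt (f := L) hdim)
  have hU0 (i : ι) (hi : i < k) : 𝓜 Uᵀ x i = 0 := by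
    simpa [L, hi] using congrFun (LinearMap.mem_ker.mp hxL) ⟨i, hi.ne⟩
  have hV0 (i : ι) (hi : k < i) : 𝓜 Vᵀ x i = 0 := by
    simpa [L, hi.not_gt] using congrFun (LinearMap.mem_ker.mp hxL) ⟨i, hi.ne'⟩
  rw [map_sub]
  exact ContinuousLinearMap.le_add_norm_sub_of_inner_le hx
    (inner_toEuclideanCLM_conj_diagonal_le hU fun i hi => hμ (not_lt.mp (mt (hU0 i) hi)))
    (le_inner_toEuclideanCLM_conj_diagonal hV fun i hi => hν (not_lt.mp (mt (hV0 i) hi)))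

end Matrix

/-- Davis–Kahan sin-theta theorem: let `A, Â` be symmetric with eigen-decompositions
`A = U diag(μ) Uᵀ`, `Â = V diag(ν) Vᵀ` (`U, V` orthogonal, eigenvalues sorted in
decreasing order), `‖Â − A‖ ≤ Δ` in operator norm, and suppose the eigengap
`λ_r(A) − λ_{r+1}(A) > Δ`. Then the sine of the largest principal angle between the
top-`r` eigenspaces, `‖P_W − P_Ŵ‖`, is at most `Δ / (λ_r(A) − λ_{r+1}(A) − Δ)`. -/
theorem davis_kahan_sin_theta
    {d r : ℕ} (hr : r < d)
    (A Ahat U V : Matrix (Fin d) (Fin d) ℝ)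
    (μ ν : Fin d → ℝ) (Δ : ℝ)
    (hU : Uᵀ * U = 1) (hV : Vᵀ * V = 1)
    (hA : A = U * Matrix.diagonal μ * Uᵀ)
    (hAhat : Ahat = V * Matrix.diagonal ν * Vᵀ)
    (hμ : ∀ i j : Fin d, i ≤ j → μ j ≤ μ i)
    (hν : ∀ i j : Fin d, i ≤ j → ν j ≤ ν i)
    (hΔ : opNorm (Ahat - A) ≤ Δ)
    (hgap : Δ < μ ⟨r - 1, by omega⟩ - μ ⟨r, hr⟩) :
    opNorm
        (U * Matrix.diagonal (fun i : Fin d => if (i : ℕ) < r then (1 : ℝ) else 0) * Uᵀ -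
         V * Matrix.diagonal (fun i : Fin d => if (i : ℕ) < r then (1 : ℝ) else 0) * Vᵀ) ≤
      Δ / (μ ⟨r - 1, by omega⟩ - μ ⟨r, hr⟩ - Δ) := by
  subst hA hAhat
  set p : Fin d → Prop := fun i => (i : ℕ) < r
  replace hΔ : ‖𝓜 (V * diagonal ν * Vᵀ - U * diagonal μ * Uᵀ)‖ ≤ Δ := hΔ
  have hΔ' : ‖𝓜 (U * diagonal μ * Uᵀ - V * diagonal ν * Vᵀ)‖ ≤ Δ := by
    rwa [← norm_neg, ← map_neg, neg_sub]
  have hlow (i : Fin d) (hi : p i) : i ≤ ⟨r - 1, by omega⟩ :=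
    Fin.le_def.mpr (by simp only [p] at hi; simp; omega)
  have hhigh (i : Fin d) (hi : ¬ p i) : ⟨r, hr⟩ ≤ i :=
    Fin.le_def.mpr (by simp only [p] at hi; simp; omega)
  have hUV := norm_one_sub_mul_spectralProjection_mul_sub_le hU hV p
    (a := μ ⟨r - 1, by omega⟩) (b := ν ⟨r, hr⟩)
    (fun i hi => hμ _ _ (hlow i hi)) (fun i hi => hν _ _ (hhigh i hi))
  have hVU := norm_one_sub_mul_spectralProjection_mul_sub_le hV hU p
    (a := ν ⟨r - 1, by omega⟩) (b := μ ⟨r, hr⟩)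
    (fun i hi => hν _ _ (hlow i hi)) (fun i hi => hμ _ _ (hhigh i hi))
  have hweyl := le_add_norm_sub_of_antitone hU hV hμ hν ⟨r, hr⟩
  have hweyl' := le_add_norm_sub_of_antitone hV hU hν hμ ⟨r - 1, by omega⟩
  have key {σ c : ℝ} (hσ : 0 ≤ σ) (h : σ * c ≤ Δ) (hc : μ ⟨r - 1, by omega⟩ - μ ⟨r, hr⟩ - Δ ≤ c) :
      σ ≤ Δ / (μ ⟨r - 1, by omega⟩ - μ ⟨r, hr⟩ - Δ) := by
    rw [le_div_iff₀ (by linarith)]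
    nlinarith
  rw [opNorm, map_sub]
  exact ((isStarProjection_spectralProjection hU p).map _).norm_sub_le
    ((isStarProjection_spectralProjection hV p).map _)
    (key (norm_nonneg _) (hUV.trans hΔ) (by linarith))
    (key (norm_nonneg _) (hVU.trans hΔ') (by linarith))
end
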